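/- On the set of finest ∞-admissible SODs of D, the right mutation operators satisfy the braid relations: ρ_iρ_j = ρ_jρ_i whenever |i−j| ≥ 2, and ρ_iρ_{i+1}ρ_i = ρ_{i+1}ρ_iρ_{i+1}. -/

import Mathlib

/-!
Common infrastructure for formalizing semi-orthogonal decompositions (SODs),
t-stabilities, admissible filtrations, mutations, Serre functors, exceptional
sequences and Verdier quotients, following the paper
"Semi-orthogonal decompositions via t-stabilities".

Full triangulated subcategories of `D` closed under extensions, direct summands
and shifts are modelled as subsets of objects `T : Set D` satisfying the
closure predicate `IsTriangClosed`.  All notions are stated relative to an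
ambient such subcategory `amb : Set D` (take `amb = Set.univ` for `D` itself).
-/

open CategoryTheory Limits Pretriangulated ZeroObject

universe w v u v₂ u₂

namespace SODPaper

variable {D : Type u} [Category.{v} D] [Preadditive D] [HasZeroObject D]
  [HasShift D ℤ] [∀ n : ℤ, (CategoryTheory.shiftFunctor D n).Additive]
  [Pretriangulated D]

/-- The closure conditions satisfied by a strictly full triangulated subcategory of `D`
closed under extensions, direct summands and shifts. -/
structure IsTriangClosed (T : Set D) : Prop where
  zero_mem : (0 : D) ∈ T
  iso_mem : ∀ {X Y : D}, (X ≅ Y) → X ∈ T → Y ∈ T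
  shift_mem : ∀ X ∈ T, ∀ n : ℤ, X⟦n⟧ ∈ T
  ext_mem : ∀ T' ∈ distTriang D, T'.obj₁ ∈ T → T'.obj₃ ∈ T → T'.obj₂ ∈ T
  summand_mem : ∀ {X Y : D} (s : Y ⟶ X) (r : X ⟶ Y), s ≫ r = 𝟙 Y → X ∈ T → Y ∈ T

/-- `⟨S⟩`: the smallest full triangulated subcategory of `D` containing `S` and closed
under extensions, direct summands and shifts. -/
def gen (S : Set D) : Set D := ⋂₀ {T : Set D | IsTriangClosed T ∧ S ⊆ T}

/-- `Hom(A, B) = 0`. -/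
def homOrth (A B : Set D) : Prop := ∀ X ∈ A, ∀ Y ∈ B, ∀ f : X ⟶ Y, f = 0

/-- The right orthogonal `B^⊥ = {X : Hom(B, X) = 0}` (inside all of `D`). -/
def rOrth (B : Set D) : Set D := {X : D | ∀ Y ∈ B, ∀ f : Y ⟶ X, f = 0}

/-- The left orthogonal `^⊥B = {X : Hom(X, B) = 0}` (inside all of `D`). -/
def lOrth (B : Set D) : Set D := {X : D | ∀ Y ∈ B, ∀ f : X ⟶ Y, f = 0}

/-- `A` is a right admissible subcategory of the (full) subcategory with objects `T`:
the inclusion functor admits a right adjoint (i.e. it is a left adjoint). -/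
def RightAdmissibleIn (A T : Set D) : Prop :=
  ∃ h : ∀ ⦃X : D⦄, X ∈ A → X ∈ T, (ObjectProperty.ιOfLE (P := fun X : D => X ∈ A) (P' := fun X : D => X ∈ T) h).IsLeftAdjoint

/-- `A` is a left admissible subcategory of the (full) subcategory with objects `T`:
the inclusion functor admits a left adjoint (i.e. it is a right adjoint). -/
def LeftAdmissibleIn (A T : Set D) : Prop :=
  ∃ h : ∀ ⦃X : D⦄, X ∈ A → X ∈ T, (ObjectProperty.ιOfLE (P := fun X : D => X ∈ A) (P' := fun X : D => X ∈ T) h).IsRightAdjoint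

/-- `A` is an admissible subcategory of the subcategory with objects `T`. -/
def AdmissibleIn (A T : Set D) : Prop := RightAdmissibleIn A T ∧ LeftAdmissibleIn A T

/-- A semi-orthogonal decomposition `(P 0, …, P (n-1))` of the triangulated subcategory
with objects `amb` (take `amb = Set.univ` for an SOD of `D`). -/
structure IsSODIn (amb : Set D) {n : ℕ} (P : Fin n → Set D) : Prop where
  subset : ∀ i, P i ⊆ amb
  closed : ∀ i, IsTriangClosed (P i)
  nonzero : ∀ i, ∃ X ∈ P i, ¬ IsZero X
  orth : ∀ i j : Fin n, i < j → homOrth (P j) (P i)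
  generates : gen (⋃ i, P i) = amb

/-- A semi-orthogonal decomposition of `D`. -/
def IsSOD {n : ℕ} (P : Fin n → Set D) : Prop := IsSODIn Set.univ P

/-- An admissible SOD: each term is admissible in the ambient subcategory. -/
def IsAdmissibleSODIn (amb : Set D) {n : ℕ} (P : Fin n → Set D) : Prop :=
  IsSODIn amb P ∧ ∀ i, AdmissibleIn (P i) amb

/-- The right mutation `ρ` of an SOD at the (0-based) position `i`:
the pair `(P i, P (i+1))` is replaced by `(P i ^⊥ ∩ ⟨P i, P (i+1)⟩, P i)`. -/
def rightMut (amb : Set D) {n : ℕ} (P : Fin n → Set D) (i : ℕ) (hi : i + 1 < n) :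
    Fin n → Set D :=
  fun k =>
    if k = (⟨i, Nat.lt_of_succ_lt hi⟩ : Fin n) then
      rOrth (P ⟨i, Nat.lt_of_succ_lt hi⟩) ∩
        gen (P ⟨i, Nat.lt_of_succ_lt hi⟩ ∪ P ⟨i + 1, hi⟩) ∩ amb
    else if k = (⟨i + 1, hi⟩ : Fin n) then P ⟨i, Nat.lt_of_succ_lt hi⟩
    else P k

/-- The left mutation `ρ̌` of an SOD at the (0-based) position `i`:
the pair `(P i, P (i+1))` is replaced by `(P (i+1), ^⊥(P (i+1)) ∩ ⟨P i, P (i+1)⟩)`. -/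
def leftMut (amb : Set D) {n : ℕ} (P : Fin n → Set D) (i : ℕ) (hi : i + 1 < n) :
    Fin n → Set D :=
  fun k =>
    if k = (⟨i, Nat.lt_of_succ_lt hi⟩ : Fin n) then P ⟨i + 1, hi⟩
    else if k = (⟨i + 1, hi⟩ : Fin n) then
      lOrth (P ⟨i + 1, hi⟩) ∩
        gen (P ⟨i, Nat.lt_of_succ_lt hi⟩ ∪ P ⟨i + 1, hi⟩) ∩ amb
    else P k

/-- All iterated right and left mutations of an SOD. -/
inductive MutClosure (amb : Set D) {n : ℕ} : (Fin n → Set D) → (Fin n → Set D) → Prop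
  | refl (P : Fin n → Set D) : MutClosure amb P P
  | right {P P' : Fin n → Set D} (h : MutClosure amb P P') (i : ℕ) (hi : i + 1 < n) :
      MutClosure amb P (rightMut amb P' i hi)
  | left {P P' : Fin n → Set D} (h : MutClosure amb P P') (i : ℕ) (hi : i + 1 < n) :
      MutClosure amb P (leftMut amb P' i hi)

/-- An `∞`-admissible SOD: all of its iterated right and left mutations (including
itself) are admissible SODs. -/
def IsInftyAdmissibleSODIn (amb : Set D) {n : ℕ} (P : Fin n → Set D) : Prop :=
  IsSODIn amb P ∧ ∀ P' : Fin n → Set D, MutClosure amb P P' → IsAdmissibleSODIn amb P'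

/-- `P` is finer than `Q` (for linearly ordered families of subcategories: SODs or
finite t-stabilities): `Q` is obtained from `P` by grouping consecutive terms via a
surjective monotone map of index sets and taking generated subcategories. -/
def Finer {Φ : Type*} {Ψ : Type*} [LinearOrder Φ] [LinearOrder Ψ]
    (P : Φ → Set D) (Q : Ψ → Set D) : Prop :=
  ∃ r : Φ → Ψ, Function.Surjective r ∧ Monotone r ∧
    ∀ ψ : Ψ, Q ψ = gen (⋃ φ ∈ {φ : Φ | r φ = ψ}, P φ)

/-- A finest SOD of `amb`: an SOD which is minimal for the `Finer` preorder, i.e.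
every SOD which is finer than it is equivalent to it. -/
def IsFinestSODIn (amb : Set D) {n : ℕ} (P : Fin n → Set D) : Prop :=
  IsSODIn amb P ∧ ∀ (m : ℕ) (Q : Fin m → Set D), IsSODIn amb Q → Finer Q P → Finer P Q

/-- A finest `∞`-admissible SOD. -/
def IsFinestInftyAdmissibleSODIn (amb : Set D) {n : ℕ} (P : Fin n → Set D) : Prop :=
  IsInftyAdmissibleSODIn amb P ∧ IsFinestSODIn amb P

/-- All iterated right and left orthogonals of a subcategory (inside `amb`). -/
inductive OrthClosure (amb : Set D) : Set D → Set D → Prop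
  | refl (A : Set D) : OrthClosure amb A A
  | right {A B : Set D} (h : OrthClosure amb A B) : OrthClosure amb A (rOrth B ∩ amb)
  | left {A B : Set D} (h : OrthClosure amb A B) : OrthClosure amb A (lOrth B ∩ amb)

/-- An `∞`-admissible subcategory: all of its iterated right and left orthogonals
are admissible. -/
def IsInftyAdmissibleSubcat (amb A : Set D) : Prop :=
  ∀ B : Set D, OrthClosure amb A B → AdmissibleIn B amb

/-- `𝒜(amb)`: the set of finest `∞`-admissible subcategories of `amb`, i.e. the
`∞`-admissible subcategories occurring as a term of some finest `∞`-admissible SOD. -/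
def scriptA (amb : Set D) : Set (Set D) :=
  {A : Set D | IsInftyAdmissibleSubcat amb A ∧
    ∃ (n : ℕ) (P : Fin n → Set D) (i : Fin n),
      IsFinestInftyAdmissibleSODIn amb P ∧ P i = A}

/-- A finite filtration `0 = T 0 ⊊ T 1 ⊊ ⋯ ⊊ T n = amb` by full triangulated
subcategories. -/
structure IsFilt (amb : Set D) {n : ℕ} (T : Fin (n + 1) → Set D) : Prop where
  closed : ∀ j, IsTriangClosed (T j)
  bot : T 0 = {X : D | IsZero X}
  top : T (Fin.last n) = amb
  strict : ∀ j : Fin n, T j.castSucc ⊂ T j.succ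

/-- A finite right admissible filtration: `T i` is right admissible in `T (i+1)`
for `1 ≤ i ≤ n - 1`. -/
def IsRightAdmFilt (amb : Set D) {n : ℕ} (T : Fin (n + 1) → Set D) : Prop :=
  IsFilt amb T ∧ ∀ j : Fin n, 1 ≤ (j : ℕ) → RightAdmissibleIn (T j.castSucc) (T j.succ)

/-- A finite left admissible filtration. -/
def IsLeftAdmFilt (amb : Set D) {n : ℕ} (T : Fin (n + 1) → Set D) : Prop :=
  IsFilt amb T ∧ ∀ j : Fin n, 1 ≤ (j : ℕ) → LeftAdmissibleIn (T j.castSucc) (T j.succ)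

/-- A finite strongly admissible (s-admissible) filtration: a right admissible
filtration such that moreover each `T i ^⊥ ∩ T (i+1)` is admissible in `amb`. -/
def IsSAdmFilt (amb : Set D) {n : ℕ} (T : Fin (n + 1) → Set D) : Prop :=
  IsRightAdmFilt amb T ∧
    ∀ j : Fin n, 1 ≤ (j : ℕ) → AdmissibleIn (rOrth (T j.castSucc) ∩ T j.succ) amb

/-- The right mutation `σ` of a finite filtration at position `p` (`1 ≤ p ≤ n - 1`):
`T p` is replaced by `⟨T p ^⊥ ∩ T (p+1), T (p-1)⟩`. -/
def filtRightMut (amb : Set D) {n : ℕ} (T : Fin (n + 1) → Set D) (p : ℕ)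
    (hp1 : 1 ≤ p) (hp2 : p < n) : Fin (n + 1) → Set D :=
  fun k =>
    if k = (⟨p, by omega⟩ : Fin (n + 1)) then
      gen ((rOrth (T ⟨p, by omega⟩) ∩ T ⟨p + 1, by omega⟩ ∩ amb) ∪ T ⟨p - 1, by omega⟩)
    else T k

/-- The left mutation `σ̌` of a finite filtration at position `p`, defined dually to
`filtRightMut`: `T p` is replaced by
`⟨T (p-1), ^⊥(T (p-1) ^⊥ ∩ T p) ∩ T (p-1) ^⊥ ∩ T (p+1)⟩` (this is the formula obtained
by transporting the left mutation of SODs through the correspondence `ξ`). -/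
def filtLeftMut (amb : Set D) {n : ℕ} (T : Fin (n + 1) → Set D) (p : ℕ)
    (hp1 : 1 ≤ p) (hp2 : p < n) : Fin (n + 1) → Set D :=
  fun k =>
    if k = (⟨p, by omega⟩ : Fin (n + 1)) then
      gen (T ⟨p - 1, by omega⟩ ∪
        (lOrth (rOrth (T ⟨p - 1, by omega⟩) ∩ T ⟨p, by omega⟩) ∩
          rOrth (T ⟨p - 1, by omega⟩) ∩ T ⟨p + 1, by omega⟩ ∩ amb))
    else T k

/-- All iterated right and left mutations of a finite filtration. -/
inductive FiltMutClosure (amb : Set D) {n : ℕ} :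
    (Fin (n + 1) → Set D) → (Fin (n + 1) → Set D) → Prop
  | refl (T : Fin (n + 1) → Set D) : FiltMutClosure amb T T
  | right {T T' : Fin (n + 1) → Set D} (h : FiltMutClosure amb T T') (p : ℕ)
      (hp1 : 1 ≤ p) (hp2 : p < n) : FiltMutClosure amb T (filtRightMut amb T' p hp1 hp2)
  | left {T T' : Fin (n + 1) → Set D} (h : FiltMutClosure amb T T') (p : ℕ)
      (hp1 : 1 ≤ p) (hp2 : p < n) : FiltMutClosure amb T (filtLeftMut amb T' p hp1 hp2)

/-- An `∞`-s-admissible filtration: all of its iterated right and left mutations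
(including itself) are s-admissible. -/
def IsInftySAdmFilt (amb : Set D) {n : ℕ} (T : Fin (n + 1) → Set D) : Prop :=
  IsFilt amb T ∧ ∀ T' : Fin (n + 1) → Set D, FiltMutClosure amb T T' → IsSAdmFilt amb T'

/-- The filtration `X` is finer than the filtration `Y`. -/
def FinerFilt {n m : ℕ} (X : Fin (n + 1) → Set D) (Y : Fin (m + 1) → Set D) : Prop :=
  ∃ r : Fin n → Fin m, Function.Surjective r ∧ Monotone r ∧
    ∀ j : Fin m, Y j.succ = gen (⋃ i ∈ {i : Fin n | r i = j}, X i.succ)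

/-- A finest filtration: minimal among right admissible filtrations for the
partial order `FinerFilt`. -/
def IsFinestFilt (amb : Set D) {n : ℕ} (T : Fin (n + 1) → Set D) : Prop :=
  ∀ (m : ℕ) (T' : Fin (m + 1) → Set D), IsRightAdmFilt amb T' → FinerFilt T' T →
    FinerFilt T T'

/-- A finite finest `∞`-s-admissible filtration. -/
def IsFinestInftySAdmFilt (amb : Set D) {n : ℕ} (T : Fin (n + 1) → Set D) : Prop :=
  IsInftySAdmFilt amb T ∧ IsFinestFilt amb T

/-- The map `ξ` sending an SOD `(P 0, …, P (n-1))` to the filtration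
`T j = ⟨P i : i + j ≥ n⟩ = P_{≥ n - j + 1}` (in the 1-based numbering of the paper). -/
def xi {n : ℕ} (P : Fin n → Set D) : Fin (n + 1) → Set D :=
  fun j => gen (⋃ i ∈ {i : Fin n | n ≤ (i : ℕ) + (j : ℕ)}, P i)

/-- The conditions for a semistable subcategory of a t-stability: a strictly full,
extension-closed, nonzero subcategory. -/
structure IsSemistableClass (A : Set D) : Prop where
  iso_mem : ∀ {X Y : D}, (X ≅ Y) → X ∈ A → Y ∈ A
  ext_mem : ∀ T' ∈ distTriang D, T'.obj₁ ∈ A → T'.obj₃ ∈ A → T'.obj₂ ∈ A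
  nonzero : ∃ X ∈ A, ¬ IsZero X

/-- `X` admits a Harder–Narasimhan filtration with respect to the family `P`:
a finite tower of triangles `0 = Y n → Y (n-1) → ⋯ → Y 1 → Y 0 = X` whose successive
cones are nonzero, semistable, with strictly decreasing phases (the phase of the cone
attached to `Y (i+1) → Y i` being `idx i`, so that `idx` is strictly monotone). -/
def HasHNFiltration {Φ : Type w} [LinearOrder Φ] (P : Φ → Set D) (X : D) : Prop :=
  ∃ (n : ℕ) (Y : Fin (n + 1) → D) (idx : Fin n → Φ),
    Y 0 = X ∧ IsZero (Y (Fin.last n)) ∧ StrictMono idx ∧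
    ∀ i : Fin n, ∃ (A : D) (f : Y i.succ ⟶ Y i.castSucc) (g : Y i.castSucc ⟶ A)
      (h : A ⟶ (Y i.succ)⟦(1 : ℤ)⟧),
      Triangle.mk f g h ∈ (distTriang D) ∧ A ∈ P (idx i) ∧ ¬ IsZero A

/-- A t-stability with trivial shift action `τ = id` on the linearly ordered index set
`Φ`, on the triangulated subcategory of `D` with objects `amb`.  (By the paper's
remark, every *finite* t-stability automatically has `τ = id`, so for finite `Φ` this
is exactly the notion of a (local) finite t-stability.) -/
structure IsTStabOn (amb : Set D) {Φ : Type w} [LinearOrder Φ] (P : Φ → Set D) : Prop where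
  subset : ∀ φ, P φ ⊆ amb
  semistable : ∀ φ, IsSemistableClass (P φ)
  shiftInv : ∀ φ (X : D), X ∈ P φ ↔ X⟦(1 : ℤ)⟧ ∈ P φ
  hom : ∀ φ' φ'' : Φ, φ'' < φ' → ∀ X ∈ P φ', ∀ Y ∈ P φ'', ∀ l : ℤ, l ≤ 0 →
    ∀ f : X ⟶ Y⟦l⟧, f = 0
  hn : ∀ X ∈ amb, ¬ IsZero X → HasHNFiltration P X

/-- A finite t-stability on `D`, presented (up to equivalence) on the linearly ordered
index set `Φ_n = Fin n`. -/
def IsFiniteTStab {n : ℕ} (P : Fin n → Set D) : Prop :=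
  IsTStabOn Set.univ P

/-- A finite finest t-stability: minimal for the `Finer` partial order among finite
t-stabilities. -/
def IsFinestTStab {n : ℕ} (P : Fin n → Set D) : Prop :=
  IsFiniteTStab P ∧ ∀ (m : ℕ) (Q : Fin m → Set D), IsFiniteTStab Q → Finer Q P → Finer P Q

section Linear

variable (𝕜 : Type w) [Field 𝕜] [Linear 𝕜 D]

/-- A Serre functor on the `𝕜`-linear triangulated category `D`: a triangulated
auto-equivalence `S` together with isomorphisms `Hom(A, B) ≅ Hom(B, S A)^*`,
natural in `A` and `B`. -/
structure SerreFunctor where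
  functor : D ⥤ D
  equivalence : functor.IsEquivalence
  commShift : functor.CommShift ℤ
  isTriangulated : letI := commShift; functor.IsTriangulated
  pairing : ∀ A B : D, (A ⟶ B) ≃ₗ[𝕜] ((B ⟶ functor.obj A) →ₗ[𝕜] 𝕜)
  natural_left : ∀ {A A' B : D} (f : A' ⟶ A) (h : A ⟶ B) (u : B ⟶ functor.obj A'),
    pairing A' B (f ≫ h) u = pairing A B h (u ≫ functor.map f)
  natural_right : ∀ {A B B' : D} (h : A ⟶ B) (g : B ⟶ B') (u : B' ⟶ functor.obj A),
    pairing A B' (h ≫ g) u = pairing A B h (g ≫ u)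

/-- An exceptional object: `Hom(E, E) = 𝕜` and `Hom(E, E[l]) = 0` for `l ≠ 0`. -/
def IsExceptional (E : D) : Prop :=
  Function.Bijective (fun c : 𝕜 => c • (𝟙 E)) ∧
    ∀ l : ℤ, l ≠ 0 → ∀ f : E ⟶ E⟦l⟧, f = 0

/-- An exceptional sequence `(E 0, …, E (n-1))`. -/
def IsExcSeq {n : ℕ} (E : Fin n → D) : Prop :=
  (∀ i, IsExceptional 𝕜 (E i)) ∧
    ∀ i j : Fin n, i < j → ∀ l : ℤ, ∀ f : E j ⟶ (E i)⟦l⟧, f = 0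

/-- A full exceptional sequence. -/
def IsFullExcSeq {n : ℕ} (E : Fin n → D) : Prop :=
  IsExcSeq 𝕜 E ∧ gen (Set.range E) = Set.univ

end Linear

/-- `L` is a left mutation `L_E F` of the exceptional pair `(E, F)`: there is a
distinguished triangle `L ⟶ M ⟶ F ⟶ L[1]` in which `M ∈ ⟨E⟩` plays the role of
`Hom^•(E, F) ⊗ E` (for an exceptional pair this is équivalent to the universal
evaluation triangle, since in addition `Hom^•(E, L) = 0`). -/
def IsLeftMutObj (E F L : D) : Prop :=
  (∀ l : ℤ, ∀ φ : E ⟶ L⟦l⟧, φ = 0) ∧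
    ∃ (M : D) (f : L ⟶ M) (g : M ⟶ F) (h : F ⟶ L⟦(1 : ℤ)⟧),
      Triangle.mk f g h ∈ (distTriang D) ∧ M ∈ gen {E}

/-- `R` is a right mutation `R_F E` of the exceptional pair `(E, F)`, dually to
`IsLeftMutObj`: there is a distinguished triangle `E ⟶ M ⟶ R ⟶ E[1]` with
`M ∈ ⟨F⟩` playing the role of `Hom^•(E, F)^* ⊗ F`, and `Hom^•(R, F) = 0`. -/
def IsRightMutObj (E F R : D) : Prop :=
  (∀ l : ℤ, ∀ φ : R ⟶ F⟦l⟧, φ = 0) ∧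
    ∃ (M : D) (f : E ⟶ M) (g : M ⟶ R) (h : R ⟶ E⟦(1 : ℤ)⟧),
      Triangle.mk f g h ∈ (distTriang D) ∧ M ∈ gen {F}

/-- `E'` is the left mutation `L_i E` of the exceptional sequence `E` at the
(0-based) position `i`. -/
def SeqLeftMut {n : ℕ} (E E' : Fin n → D) (i : ℕ) (hi : i + 1 < n) : Prop :=
  IsLeftMutObj (E ⟨i, Nat.lt_of_succ_lt hi⟩) (E ⟨i + 1, hi⟩) (E' ⟨i, Nat.lt_of_succ_lt hi⟩) ∧
    E' ⟨i + 1, hi⟩ = E ⟨i, Nat.lt_of_succ_lt hi⟩ ∧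
    ∀ k : Fin n, k ≠ ⟨i, Nat.lt_of_succ_lt hi⟩ → k ≠ ⟨i + 1, hi⟩ → E' k = E k

/-- `E'` is the right mutation `R_i E` of the exceptional sequence `E` at the
(0-based) position `i`. -/
def SeqRightMut {n : ℕ} (E E' : Fin n → D) (i : ℕ) (hi : i + 1 < n) : Prop :=
  IsRightMutObj (E ⟨i, Nat.lt_of_succ_lt hi⟩) (E ⟨i + 1, hi⟩) (E' ⟨i + 1, hi⟩) ∧
    E' ⟨i, Nat.lt_of_succ_lt hi⟩ = E ⟨i + 1, hi⟩ ∧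
    ∀ k : Fin n, k ≠ ⟨i, Nat.lt_of_succ_lt hi⟩ → k ≠ ⟨i + 1, hi⟩ → E' k = E k

/-- The class of morphisms of `D` whose cone lies in `U`; the Verdier quotient
`D/U` is the localization of `D` at this class. -/
def coneIn (U : Set D) : MorphismProperty D :=
  fun X _ f => ∃ (Z : D) (g : _ ⟶ Z) (h : Z ⟶ X⟦(1 : ℤ)⟧),
    Triangle.mk f g h ∈ (distTriang D) ∧ Z ∈ U

/-- The essential image `Q A` of a subcategory `A` under a functor `Q`. -/
def imageSet {E' : Type u₂} [Category.{v₂} E'] (Q : D ⥤ E') (A : Set D) : Set E' :=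
  {Y : E' | ∃ X ∈ A, Nonempty (Q.obj X ≅ Y)}

/-! ### Auxiliary lemmas for the proof of the braid relations -/

lemma subset_gen (S : Set D) : S ⊆ gen S := by
  intro X hX T hT
  exact hT.2 hX

lemma gen_subset {S T : Set D} (hT : IsTriangClosed T) (h : S ⊆ T) : gen S ⊆ T := by
  intro X hX
  exact hX T ⟨hT, h⟩

/-- Transfer of Hom-vanishing across shifts of the source. -/
lemma shift_src_hom_zero {S : Set D} (hS : ∀ X ∈ S, ∀ n : ℤ, X⟦n⟧ ∈ S) {Z : D}
    (hz : ∀ W ∈ S, ∀ f : W ⟶ Z, f = 0) :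
    ∀ W ∈ S, ∀ (n : ℤ) (f : W ⟶ Z⟦n⟧), f = 0 := by
  intro W hW n f
  have h1 : (shiftFunctor D (-n)).map f ≫
      (shiftFunctorCompIsoId D n (-n) (add_neg_cancel n)).hom.app Z = 0 :=
    hz _ (hS W hW (-n)) _
  have h2 : (shiftFunctor D (-n)).map f = 0 := by
    rw [← cancel_mono ((shiftFunctorCompIsoId D n (-n) (add_neg_cancel n)).hom.app Z)]
    simpa using h1
  apply (shiftFunctor D (-n)).map_injective
  simpa using h2

/-- The left-orthogonal of all shifts of a fixed object is triangulated-closed. -/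
lemma isTriangClosed_lorthShifts (Z : D) :
    IsTriangClosed {Y : D | ∀ (l : ℤ) (f : Y ⟶ Z⟦l⟧), f = 0} where
  zero_mem := fun _ f => (isZero_zero D).eq_of_src f 0
  iso_mem := by
    intro X Y e hX l f
    have h : e.hom ≫ f = 0 := hX l _
    calc f = e.inv ≫ (e.hom ≫ f) := by simp
    _ = 0 := by rw [h]; simp
  shift_mem := by
    intro X hX n l f
    have h1 : (shiftFunctorCompIsoId D n (-n) (add_neg_cancel n)).inv.app X ≫
        (shiftFunctor D (-n)).map f ≫
        ((shiftFunctorAdd' D l (-n) (l + -n) rfl).app Z).inv = 0 := hX (l + -n) _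
    have h2 : (shiftFunctor D (-n)).map f = 0 := by
      rw [← cancel_epi ((shiftFunctorCompIsoId D n (-n) (add_neg_cancel n)).inv.app X),
        ← cancel_mono (((shiftFunctorAdd' D l (-n) (l + -n) rfl).app Z).inv)]
      simpa using h1
    apply (shiftFunctor D (-n)).map_injective
    simpa using h2
  ext_mem := by
    intro T hT h1 h3 l f
    obtain ⟨g, hg⟩ := Triangle.yoneda_exact₂ T hT f (h1 l _)
    rw [hg, h3 l g, comp_zero]
  summand_mem := by
    intro X Y s r hsr hX l f
    have h : r ≫ f = 0 := hX l _
    calc f = s ≫ (r ≫ f) := by rw [← Category.assoc, hsr, Category.id_comp]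
    _ = 0 := by rw [h, comp_zero]

/-- Decomposition triangle attached to a right admissible subcategory. -/
lemma exists_decomposition (A : Set D) (hshift : ∀ X ∈ A, ∀ n : ℤ, X⟦n⟧ ∈ A)
    (hadm : RightAdmissibleIn A Set.univ) (X : D) :
    ∃ (a c : D) (f : a ⟶ X) (g : X ⟶ c) (h : c ⟶ a⟦(1:ℤ)⟧),
      Triangle.mk f g h ∈ (distTriang D) ∧ a ∈ A ∧
      (∀ Y ∈ A, ∀ φ : Y ⟶ X, ∃ w : Y ⟶ a, w ≫ f = φ) ∧ c ∈ rOrth A := by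
  obtain ⟨hsub, hadj⟩ := hadm
  haveI := hadj
  set F := ObjectProperty.ιOfLE (P := fun X : D => X ∈ A)
    (P' := fun X : D => X ∈ (Set.univ : Set D)) hsub with hF
  let adj := Adjunction.ofIsLeftAdjoint F
  let Xhat : ObjectProperty.FullSubcategory (fun X : D => X ∈ (Set.univ : Set D)) := ⟨X, trivial⟩
  let aobj := F.rightAdjoint.obj Xhat
  let a : D := aobj.obj
  have ha : a ∈ A := aobj.property
  let ε : a ⟶ X := (adj.counit.app Xhat).hom
  have hsurj : ∀ Y ∈ A, ∀ φ : Y ⟶ X, ∃ w : Y ⟶ a, w ≫ ε = φ := by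
    intro Y hY φ
    let Yhat : ObjectProperty.FullSubcategory (fun X : D => X ∈ A) := ⟨Y, hY⟩
    let φ' : F.obj Yhat ⟶ Xhat := InducedCategory.homMk φ
    have h3 := (adj.homEquiv Yhat Xhat).symm_apply_apply φ'
    rw [Adjunction.homEquiv_counit] at h3
    exact ⟨(adj.homEquiv Yhat Xhat φ').hom, congrArg InducedCategory.Hom.hom h3⟩
  have hinj : ∀ Y ∈ A, ∀ w : Y ⟶ a, w ≫ ε = 0 → w = 0 := by
    intro Y hY w hw
    let Yhat : ObjectProperty.FullSubcategory (fun X : D => X ∈ A) := ⟨Y, hY⟩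
    let w' : Yhat ⟶ F.rightAdjoint.obj Xhat := InducedCategory.homMk w
    let z' : Yhat ⟶ F.rightAdjoint.obj Xhat := InducedCategory.homMk (0 : Y ⟶ a)
    have h2 : (adj.homEquiv Yhat Xhat).symm w' = (adj.homEquiv Yhat Xhat).symm z' := by
      rw [Adjunction.homEquiv_counit, Adjunction.homEquiv_counit]
      apply InducedCategory.hom_ext
      show w ≫ ε = (0 : Y ⟶ a) ≫ ε
      rw [hw, zero_comp]
    exact congrArg InducedCategory.Hom.hom ((adj.homEquiv Yhat Xhat).symm.injective h2)
  obtain ⟨c, g, hm, hT⟩ := Pretriangulated.distinguished_cocone_triangle ε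
  refine ⟨a, c, ε, g, hm, hT, ha, hsurj, ?_⟩
  intro W hW φ
  have hψ : (φ ≫ hm) ≫ ε⟦(1:ℤ)⟧' = 0 := by
    rw [Category.assoc]
    have h := comp_distTriang_mor_zero₃₁ _ hT
    change hm ≫ ε⟦(1:ℤ)⟧' = 0 at h
    rw [h, comp_zero]
  have hψ0 : φ ≫ hm = 0 := by
    set ψ : W ⟶ a⟦(1:ℤ)⟧ := φ ≫ hm with hψdef
    let e := shiftFunctorCompIsoId D (1:ℤ) (-1:ℤ) (by omega)
    have hu : ((shiftFunctor D (-1:ℤ)).map ψ ≫ e.hom.app a) ≫ ε = 0 := by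
      rw [Category.assoc]
      have hnat : e.hom.app a ≫ ε
          = (shiftFunctor D (-1:ℤ)).map (ε⟦(1:ℤ)⟧') ≫ e.hom.app X := by
        have h := e.hom.naturality ε
        dsimp at h ⊢
        rw [h]
      rw [hnat, ← Category.assoc, ← Functor.map_comp, hψ, Functor.map_zero, zero_comp]
    have h0 := hinj _ (hshift W hW (-1)) _ hu
    have hmap : (shiftFunctor D (-1:ℤ)).map ψ = 0 := by
      rw [← cancel_mono (e.hom.app a)]
      simpa using h0
    apply (shiftFunctor D (-1:ℤ)).map_injective
    simpa using hmap
  obtain ⟨χ, hχ⟩ := Triangle.coyoneda_exact₃ _ hT φ hψ0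
  obtain ⟨w, hw⟩ := hsurj W hW χ
  have hεg : ε ≫ g = 0 := comp_distTriang_mor_zero₁₂ _ hT
  rw [hχ, ← hw]
  change (w ≫ ε) ≫ g = 0
  rw [Category.assoc, hεg, comp_zero]

/-- In an SOD with right admissible terms, an object right-orthogonal to the terms
`≥ m` and left-orthogonal to the terms `< m` is zero. -/
lemma isZero_of_orth {n : ℕ} {Q : Fin n → Set D} (hS : IsSODIn Set.univ Q)
    (hadm : ∀ k, RightAdmissibleIn (Q k) Set.univ) (m : ℕ) :
    ∀ X : D,
      (∀ k : Fin n, m ≤ (k : ℕ) → ∀ W ∈ Q k, ∀ f : W ⟶ X, f = 0) →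
      (∀ k : Fin n, (k : ℕ) < m → ∀ W ∈ Q k, ∀ f : X ⟶ W, f = 0) →
      IsZero X := by
  induction m with
  | zero =>
    intro X hr _
    have hL : Set.univ ⊆ {Y : D | ∀ (l : ℤ) (f : Y ⟶ X⟦l⟧), f = 0} := by
      rw [← hS.generates]
      apply gen_subset (isTriangClosed_lorthShifts X)
      apply Set.iUnion_subset
      intro k W hW
      exact fun l f =>
        shift_src_hom_zero (hS.closed k).shift_mem (hr k (Nat.zero_le _)) W hW l f
    have h0 : ((shiftFunctorZero D ℤ).inv.app X) = 0 := hL (Set.mem_univ X) 0 _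
    rw [IsZero.iff_id_eq_zero]
    calc 𝟙 X = (shiftFunctorZero D ℤ).inv.app X ≫ (shiftFunctorZero D ℤ).hom.app X := by simp
    _ = 0 := by rw [h0, zero_comp]
  | succ m ih =>
    intro X hr hl
    by_cases hm : m < n
    · obtain ⟨a, c, f, g, h, hT, ha, hsurj, hc⟩ :=
        exists_decomposition (Q ⟨m, hm⟩) (hS.closed _).shift_mem (hadm _) X
      have hcz : IsZero c := by
        apply ih c
        · intro k hk W hW φ
          by_cases hkm : (k : ℕ) = m
          · have hke : k = ⟨m, hm⟩ := Fin.ext hkm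
            subst hke
            exact hc W hW φ
          · have h1 : φ ≫ h = 0 :=
              hS.orth ⟨m, hm⟩ k (by rw [Fin.lt_def]; show m < (k : ℕ); omega) W hW _
                ((hS.closed _).shift_mem a ha 1) (φ ≫ h)
            obtain ⟨χ, hχ⟩ := Triangle.coyoneda_exact₃ _ hT φ h1
            rw [hχ, hr k (by omega) W hW χ]; exact zero_comp
        · intro k hk W hW φ
          have h1 : g ≫ φ = 0 := hl k (by omega) W hW _
          obtain ⟨ψ, hψ⟩ := Triangle.yoneda_exact₃ _ hT φ h1
          rw [hψ, hS.orth k ⟨m, hm⟩ (by rw [Fin.lt_def]; show (k : ℕ) < m; omega) _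
            ((hS.closed _).shift_mem a ha 1) W hW ψ]; exact comp_zero
      have hg0 : g = 0 := hcz.eq_of_tgt g 0
      obtain ⟨r, hr2⟩ := Triangle.coyoneda_exact₂ _ hT (𝟙 X) (by change 𝟙 X ≫ g = 0; rw [hg0, comp_zero])
      have hr0 : r = 0 := hl ⟨m, hm⟩ (by simpa using Nat.lt_succ_self m) a ha r
      rw [IsZero.iff_id_eq_zero, hr2, hr0]; exact zero_comp
    · exact ih X (fun k hk => absurd k.isLt (by omega)) (fun k hk => hl k (by omega))

/-- Two SODs of `D` with right admissible terms which agree except possibly in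
position `i` agree in position `i` as well (uniqueness of the SOD-complement). -/
lemma sod_term_unique {n : ℕ} {P' P'' : Fin n → Set D} (h' : IsSODIn Set.univ P')
    (h'' : IsSODIn Set.univ P'') (hadm : ∀ k, RightAdmissibleIn (P'' k) Set.univ)
    (i : Fin n) (hagree : ∀ k, k ≠ i → P' k = P'' k) : P' i ⊆ P'' i := by
  intro X hX
  obtain ⟨a, c, f, g, h, hT, ha, hsurj, hc⟩ :=
    exists_decomposition (P'' i) (h''.closed i).shift_mem (hadm i) X
  have hcz : IsZero c := by
    apply isZero_of_orth h'' hadm (i : ℕ) c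
    · intro k hk W hW φ
      by_cases hki : k = i
      · subst hki
        exact hc W hW φ
      · have hik : i < k := by
          rw [Fin.lt_def]
          rcases Nat.lt_or_ge (i : ℕ) (k : ℕ) with hlt | hge
          · exact hlt
          · exact absurd (Fin.ext (le_antisymm hge hk)) hki
        have h1 : φ ≫ h = 0 :=
          h''.orth i k hik W hW _ ((h''.closed i).shift_mem a ha 1) _
        obtain ⟨χ, hχ⟩ := Triangle.coyoneda_exact₃ _ hT φ h1
        have hW' : W ∈ P' k := by rw [hagree k hki]; exact hW
        rw [hχ, h'.orth i k hik W hW' X hX χ]; exact zero_comp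
    · intro k hk W hW φ
      have hki : k ≠ i := fun e => by subst e; omega
      have hik : k < i := by rw [Fin.lt_def]; exact hk
      have hW' : W ∈ P' k := by rw [hagree k hki]; exact hW
      have h1 : g ≫ φ = 0 := h'.orth k i hik X hX W hW' _
      obtain ⟨ψ, hψ⟩ := Triangle.yoneda_exact₃ _ hT φ h1
      rw [hψ, h''.orth k i hik _ ((h''.closed i).shift_mem a ha 1) W hW ψ]; exact comp_zero
  have hg0 : g = 0 := hcz.eq_of_tgt g 0
  obtain ⟨r, hr2⟩ := Triangle.coyoneda_exact₂ _ hT (𝟙 X) (by change 𝟙 X ≫ g = 0; rw [hg0, comp_zero])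
  exact (h''.closed i).summand_mem r f hr2.symm ha

lemma rightMut_apply_other {amb : Set D} {n : ℕ} (P : Fin n → Set D) {i : ℕ}
    (hi : i + 1 < n) (k : Fin n) (h1 : (k : ℕ) ≠ i) (h2 : (k : ℕ) ≠ i + 1) :
    rightMut amb P i hi k = P k := by
  unfold rightMut
  rw [if_neg (fun e => h1 (by rw [e])), if_neg (fun e => h2 (by rw [e]))]

lemma rightMut_apply_mk {amb : Set D} {n : ℕ} (P : Fin n → Set D) {i : ℕ}
    (hi : i + 1 < n) {m : ℕ} (hm : m < n) (h1 : m ≠ i) (h2 : m ≠ i + 1) :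
    rightMut amb P i hi ⟨m, hm⟩ = P ⟨m, hm⟩ :=
  rightMut_apply_other P hi ⟨m, hm⟩ h1 h2

lemma rightMut_apply_fst {amb : Set D} {n : ℕ} (P : Fin n → Set D) {i : ℕ}
    (hi : i + 1 < n) :
    rightMut amb P i hi ⟨i, Nat.lt_of_succ_lt hi⟩ =
      rOrth (P ⟨i, Nat.lt_of_succ_lt hi⟩) ∩
        gen (P ⟨i, Nat.lt_of_succ_lt hi⟩ ∪ P ⟨i + 1, hi⟩) ∩ amb := by
  unfold rightMut
  rw [if_pos rfl]

lemma rightMut_apply_snd {amb : Set D} {n : ℕ} (P : Fin n → Set D) {i : ℕ}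
    (hi : i + 1 < n) :
    rightMut amb P i hi ⟨i + 1, hi⟩ = P ⟨i, Nat.lt_of_succ_lt hi⟩ := by
  unfold rightMut
  rw [if_neg (by simp only [Fin.mk.injEq]; omega), if_pos rfl]


/-- On the set of finest `∞`-admissible SODs of `D`, the right
mutation operators satisfy the braid relations `ρ_i ρ_j = ρ_j ρ_i` for `|i - j| ≥ 2`
and `ρ_i ρ_{i+1} ρ_i = ρ_{i+1} ρ_i ρ_{i+1}` (positions 0-based). -/
theorem braid_relations_right_mutations
    (𝕜 : Type w) [Field 𝕜] [IsAlgClosed 𝕜] [CategoryTheory.Linear 𝕜 D] (n : ℕ) (P : Fin n → Set D)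
    (hP : IsFinestInftyAdmissibleSODIn Set.univ P) :
    (∀ (i j : ℕ) (hi : i + 1 < n) (hj : j + 1 < n), i + 2 ≤ j ∨ j + 2 ≤ i →
      rightMut Set.univ (rightMut Set.univ P j hj) i hi =
        rightMut Set.univ (rightMut Set.univ P i hi) j hj) ∧
    (∀ (i : ℕ) (hi : i + 1 < n) (hi' : i + 2 < n),
      rightMut Set.univ (rightMut Set.univ (rightMut Set.univ P i hi) (i + 1) (by omega))
          i hi =
        rightMut Set.univ (rightMut Set.univ (rightMut Set.univ P (i + 1) (by omega)) i hi)
          (i + 1) (by omega)) := by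
  constructor
  · -- commuting mutations at distance ≥ 2
    intro i j hi hj hij
    funext k
    by_cases h1 : (k : ℕ) = i
    · have hke : k = ⟨i, Nat.lt_of_succ_lt hi⟩ := Fin.ext h1
      subst hke
      rw [rightMut_apply_fst, rightMut_apply_mk P hj _ (by omega) (by omega),
        rightMut_apply_mk P hj _ (by omega) (by omega),
        rightMut_apply_mk (rightMut Set.univ P i hi) hj _ (by omega) (by omega),
        rightMut_apply_fst]
    · by_cases h2 : (k : ℕ) = i + 1
      · have hke : k = ⟨i + 1, hi⟩ := Fin.ext h2
        subst hke
        rw [rightMut_apply_snd, rightMut_apply_mk P hj _ (by omega) (by omega),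
          rightMut_apply_mk (rightMut Set.univ P i hi) hj _ (by omega) (by omega),
          rightMut_apply_snd]
      · by_cases h3 : (k : ℕ) = j
        · have hke : k = ⟨j, Nat.lt_of_succ_lt hj⟩ := Fin.ext h3
          subst hke
          rw [rightMut_apply_mk (rightMut Set.univ P j hj) hi _ (by omega) (by omega),
            rightMut_apply_fst, rightMut_apply_fst,
            rightMut_apply_mk P hi _ (by omega) (by omega),
            rightMut_apply_mk P hi _ (by omega) (by omega)]
        · by_cases h4 : (k : ℕ) = j + 1
          · have hke : k = ⟨j + 1, hj⟩ := Fin.ext h4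
            subst hke
            rw [rightMut_apply_mk (rightMut Set.univ P j hj) hi _ (by omega) (by omega),
              rightMut_apply_snd, rightMut_apply_snd,
              rightMut_apply_mk P hi _ (by omega) (by omega)]
          · rw [rightMut_apply_other (rightMut Set.univ P j hj) hi k h1 h2,
              rightMut_apply_other P hj k h3 h4,
              rightMut_apply_other (rightMut Set.univ P i hi) hj k h3 h4,
              rightMut_apply_other P hi k h1 h2]
  · -- the braid relation
    intro i hi hi'
    have hii : i + 1 + 1 < n := by omega
    have hQ : IsAdmissibleSODIn Set.univ
        (rightMut Set.univ (rightMut Set.univ (rightMut Set.univ P i hi) (i + 1) hii) i hi) :=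
      hP.1.2 _ (MutClosure.right
        (MutClosure.right (MutClosure.right (MutClosure.refl P) i hi) (i + 1) hii) i hi)
    have hR : IsAdmissibleSODIn Set.univ
        (rightMut Set.univ (rightMut Set.univ (rightMut Set.univ P (i + 1) hii) i hi)
          (i + 1) hii) :=
      hP.1.2 _ (MutClosure.right
        (MutClosure.right (MutClosure.right (MutClosure.refl P) (i + 1) hii) i hi) (i + 1) hii)
    have hagree : ∀ k : Fin n, k ≠ ⟨i, Nat.lt_of_succ_lt hi⟩ →
        rightMut Set.univ (rightMut Set.univ (rightMut Set.univ P i hi) (i + 1) hii) i hi k =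
        rightMut Set.univ (rightMut Set.univ (rightMut Set.univ P (i + 1) hii) i hi)
          (i + 1) hii k := by
      intro k hk
      have hki : (k : ℕ) ≠ i := fun e => hk (Fin.ext e)
      by_cases h1 : (k : ℕ) = i + 1
      · have hke : k = ⟨i + 1, Nat.lt_of_succ_lt hii⟩ := Fin.ext h1
        subst hke
        rw [rightMut_apply_snd (rightMut Set.univ (rightMut Set.univ P i hi) (i + 1) hii) hi,
          rightMut_apply_mk (rightMut Set.univ P i hi) hii (Nat.lt_of_succ_lt
            (Nat.lt_of_succ_lt hii)) (by omega) (by omega),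
          rightMut_apply_fst P hi,
          rightMut_apply_fst (rightMut Set.univ (rightMut Set.univ P (i + 1) hii) i hi) hii,
          rightMut_apply_snd (rightMut Set.univ P (i + 1) hii) hi,
          rightMut_apply_mk (rightMut Set.univ P (i + 1) hii) hi hii (by omega) (by omega),
          rightMut_apply_mk P hii (Nat.lt_of_succ_lt (Nat.lt_of_succ_lt hii))
            (by omega) (by omega),
          rightMut_apply_snd P hii]
      · by_cases h2 : (k : ℕ) = i + 1 + 1
        · have hke : k = ⟨i + 1 + 1, hii⟩ := Fin.ext h2
          subst hke
          rw [rightMut_apply_mk (rightMut Set.univ (rightMut Set.univ P i hi) (i + 1) hii)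
              hi hii (by omega) (by omega),
            rightMut_apply_snd (rightMut Set.univ P i hi) hii,
            rightMut_apply_snd P hi,
            rightMut_apply_snd (rightMut Set.univ (rightMut Set.univ P (i + 1) hii) i hi) hii,
            rightMut_apply_snd (rightMut Set.univ P (i + 1) hii) hi,
            rightMut_apply_mk P hii (Nat.lt_of_succ_lt (Nat.lt_of_succ_lt hii))
              (by omega) (by omega)]
        · rw [rightMut_apply_other (rightMut Set.univ (rightMut Set.univ P i hi) (i + 1) hii)
              hi k hki h1,
            rightMut_apply_other (rightMut Set.univ P i hi) hii k h1 h2,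
            rightMut_apply_other P hi k hki h1,
            rightMut_apply_other (rightMut Set.univ (rightMut Set.univ P (i + 1) hii) i hi)
              hii k h1 h2,
            rightMut_apply_other (rightMut Set.univ P (i + 1) hii) hi k hki h1,
            rightMut_apply_other P hii k h1 h2]
    have hmain :
        rightMut Set.univ (rightMut Set.univ (rightMut Set.univ P i hi) (i + 1) hii) i hi =
        rightMut Set.univ (rightMut Set.univ (rightMut Set.univ P (i + 1) hii) i hi)
          (i + 1) hii := by
      funext k
      by_cases hk : k = ⟨i, Nat.lt_of_succ_lt hi⟩
      · subst hk
        exact Set.Subset.antisymm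
          (sod_term_unique hQ.1 hR.1 (fun k => ((hR.2 k).1)) _ hagree)
          (sod_term_unique hR.1 hQ.1 (fun k => ((hQ.2 k).1)) _
            (fun k hk => (hagree k hk).symm))
      · exact hagree k hk
    exact hmain


end SODPaper
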